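/- Let A be an n×n row-stochastic matrix admitting a strictly positive invariant distribution π (πA = π with all π_i > 0), and let X ∈ ℚ^{C(n,2)} be nonnegative. If A^{∨2}·Xᵀ = Xᵀ, then X̂ = AX̂Aᵀ. -/

import Mathlib

open Matrix BigOperators Filter

/-- Index set of pairs `(i,j)` with `i < j`. -/
abbrev Pairs (n : ℕ) := {p : Fin n × Fin n // p.1 < p.2}

/-- Zeon second power: matrix of 2×2 permanents. -/
def zeonSq {n : ℕ} {R : Type*} [CommRing R] (A : Matrix (Fin n) (Fin n) R) :
    Matrix (Pairs n) (Pairs n) R :=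
  Matrix.of fun I J =>
    A I.1.1 J.1.1 * A I.1.2 J.1.2 + A I.1.1 J.1.2 * A I.1.2 J.1.1

/-- `Mat(X)`: symmetric matrix with zero diagonal built from a vector indexed by pairs. -/
def matOf {n : ℕ} {R : Type*} [CommRing R] (X : Pairs n → R) :
    Matrix (Fin n) (Fin n) R :=
  Matrix.of fun i j =>
    if h : i < j then X ⟨(i, j), h⟩ else if h' : j < i then X ⟨(j, i), h'⟩ else 0

/-!
Put `B = A X̂ Aᵀ`. For `i ≠ j` the entry `B i j` is the `(i, j)` coordinate of `A^{∨2} X`, so the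
fixed-point equation makes `B` and `X̂` agree off the diagonal, where `X̂` vanishes and `B` is
nonnegative. Invariance of `π` gives `π B πᵀ = (π A) X̂ (π A)ᵀ = π X̂ πᵀ`, hence
`∑ i, π i ^ 2 * B i i = 0`, and positivity of `π` forces the diagonal of `B` to vanish.
-/

lemma sum_sum_dite_lt {n : ℕ} {M : Type*} [AddCommMonoid M] (g : (a b : Fin n) → a < b → M) :
    ∑ a, ∑ b, (if h : a < b then g a b h else 0) = ∑ I : Pairs n, g I.1.1 I.1.2 I.2 := by
  rw [← Fintype.sum_prod_type' (f := fun a b => if h : a < b then g a b h else 0),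
    ← Fintype.sum_subtype_add_sum_subtype (fun p : Fin n × Fin n => p.1 < p.2)]
  rw [Fintype.sum_eq_zero (α := {p : Fin n × Fin n // ¬p.1 < p.2}) _ fun p => dif_neg p.2,
    add_zero]
  exact Fintype.sum_congr _ _ fun p => dif_pos p.2

section matOf

variable {n : ℕ} {R : Type*} [CommRing R]

lemma matOf_apply_of_lt (X : Pairs n → R) {i j : Fin n} (h : i < j) :
    matOf X i j = X ⟨(i, j), h⟩ := by
  simp [matOf, h]

lemma matOf_apply_of_gt (X : Pairs n → R) {i j : Fin n} (h : j < i) :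
    matOf X i j = X ⟨(j, i), h⟩ := by
  simp [matOf, h, h.not_gt]

@[simp] lemma matOf_apply_self (X : Pairs n → R) (i : Fin n) : matOf X i i = 0 := by
  simp [matOf]

lemma matOf_apply_eq_add (X : Pairs n → R) (i j : Fin n) :
    matOf X i j = (if h : i < j then X ⟨(i, j), h⟩ else 0)
      + if h : j < i then X ⟨(j, i), h⟩ else 0 := by
  rcases lt_trichotomy i j with h | rfl | h
  · rw [matOf_apply_of_lt X h, dif_pos h, dif_neg h.asymm, add_zero]
  · simp
  · rw [matOf_apply_of_gt X h, dif_neg h.asymm, dif_pos h, zero_add]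

lemma matOf_nonneg [Preorder R] (X : Pairs n → R) (hX : ∀ I, 0 ≤ X I) (i j : Fin n) :
    0 ≤ matOf X i j := by
  rcases lt_trichotomy i j with h | rfl | h
  · exact matOf_apply_of_lt X h ▸ hX _
  · simp
  · exact matOf_apply_of_gt X h ▸ hX _

lemma sum_sum_mul_matOf (X : Pairs n → R) (f : Fin n → Fin n → R) :
    ∑ a, ∑ b, f a b * matOf X a b = ∑ I : Pairs n, (f I.1.1 I.1.2 + f I.1.2 I.1.1) * X I := by
  simp only [matOf_apply_eq_add, mul_add, Finset.sum_add_distrib, add_mul, mul_dite, mul_zero]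
  rw [Finset.sum_comm (f := fun a b => if h : b < a then _ else 0), sum_sum_dite_lt,
    sum_sum_dite_lt, ← Finset.sum_add_distrib]

lemma mul_matOf_mul_transpose_apply (A : Matrix (Fin n) (Fin n) R) (X : Pairs n → R)
    (i j : Fin n) :
    (A * matOf X * Aᵀ) i j
      = ∑ I : Pairs n, (A i I.1.1 * A j I.1.2 + A i I.1.2 * A j I.1.1) * X I := by
  rw [← sum_sum_mul_matOf X (fun a b => A i a * A j b)]
  simp only [mul_apply, transpose_apply, Finset.sum_mul]
  rw [Finset.sum_comm]
  refine Finset.sum_congr rfl fun a _ => Finset.sum_congr rfl fun b _ => ?_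
  ring

lemma mul_matOf_mul_transpose_apply_of_ne (A : Matrix (Fin n) (Fin n) R) (X : Pairs n → R)
    {i j : Fin n} (hij : i ≠ j) :
    (A * matOf X * Aᵀ) i j = matOf (zeonSq A *ᵥ X) i j := by
  rcases hij.lt_or_gt with h | h
  · rw [matOf_apply_of_lt _ h, mul_matOf_mul_transpose_apply]
    rfl
  · rw [matOf_apply_of_gt _ h, mul_matOf_mul_transpose_apply]
    refine Finset.sum_congr rfl fun I _ => ?_
    simp only [zeonSq, of_apply]
    ring

end matOf

namespace Matrix

variable {ι R : Type*} [Fintype ι]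

lemma mul_mul_transpose_apply_nonneg [CommSemiring R] [PartialOrder R] [IsOrderedRing R]
    {A M : Matrix ι ι R} (hA : ∀ i j, 0 ≤ A i j) (hM : ∀ i j, 0 ≤ M i j) (i j : ι) :
    0 ≤ (A * M * Aᵀ) i j := by
  simp only [mul_apply, transpose_apply]
  exact Finset.sum_nonneg fun b _ => mul_nonneg
    (Finset.sum_nonneg fun a _ => mul_nonneg (hA i a) (hM a b)) (hA j b)

lemma dotProduct_mul_mul_transpose_mulVec [CommSemiring R] (A M : Matrix ι ι R) (v : ι → R) :
    v ⬝ᵥ ((A * M * Aᵀ) *ᵥ v) = (v ᵥ* A) ⬝ᵥ (M *ᵥ (v ᵥ* A)) := by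
  rw [← mulVec_mulVec, ← mulVec_mulVec, dotProduct_mulVec, mulVec_transpose]

variable [CommRing R] [LinearOrder R] [IsStrictOrderedRing R]

lemma eq_zero_of_dotProduct_diagonal_mulVec_eq_zero [DecidableEq ι] {d v : ι → R}
    (hd : ∀ i, 0 ≤ d i) (hv : ∀ i, v i ≠ 0) (h : v ⬝ᵥ (diagonal d *ᵥ v) = 0) : d = 0 := by
  have hterm : ∀ i, 0 ≤ v i * (d i * v i) := fun i => by
    rw [mul_left_comm]; exact mul_nonneg (hd i) (mul_self_nonneg _)
  simp only [dotProduct, mulVec_diagonal] at h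
  funext i
  simpa [hv i] using
    (Finset.sum_eq_zero_iff_of_nonneg fun i _ => hterm i).mp h i (Finset.mem_univ i)

lemma eq_of_offDiag_eq_of_dotProduct_mulVec_eq [DecidableEq ι] {B M : Matrix ι ι R} {v : ι → R}
    (hoff : ∀ i j, i ≠ j → B i j = M i j) (hdiag : ∀ i, M i i ≤ B i i) (hv : ∀ i, v i ≠ 0)
    (hq : v ⬝ᵥ (B *ᵥ v) = v ⬝ᵥ (M *ᵥ v)) : B = M := by
  have hdiff : B - M = diagonal fun i => B i i - M i i := by
    ext i j
    rcases eq_or_ne i j with rfl | hij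
    · simp
    · simp [hij, hoff i j hij]
  have hzero := eq_zero_of_dotProduct_diagonal_mulVec_eq_zero (fun i => sub_nonneg.mpr (hdiag i))
    hv (by rw [← hdiff, sub_mulVec, dotProduct_sub, hq, sub_self])
  rw [← sub_eq_zero, hdiff, hzero]
  exact diagonal_zero

end Matrix

theorem stmt11_general {n : ℕ} (A : Matrix (Fin n) (Fin n) ℚ)
    (hA0 : ∀ i j, 0 ≤ A i j)
    (pv : Fin n → ℚ) (hpv : ∀ i, 0 < pv i)
    (hinv : pv ᵥ* A = pv)
    (X : Pairs n → ℚ) (hX : ∀ I, 0 ≤ X I)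
    (h : zeonSq A *ᵥ X = X) :
    matOf X = A * matOf X * Aᵀ := by
  refine (eq_of_offDiag_eq_of_dotProduct_mulVec_eq (B := A * matOf X * Aᵀ)
    (fun i j hij => ?_) (fun i => ?_) (fun i => (hpv i).ne') ?_).symm
  · rw [mul_matOf_mul_transpose_apply_of_ne A X hij, h]
  · rw [matOf_apply_self]
    exact mul_mul_transpose_apply_nonneg hA0 (matOf_nonneg X hX) i i
  · rw [dotProduct_mul_mul_transpose_mulVec, hinv]

theorem stmt11 {n : ℕ} (A : Matrix (Fin n) (Fin n) ℚ)
    (hA0 : ∀ i j, 0 ≤ A i j) (hA1 : ∀ i, ∑ j, A i j = 1)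
    (pv : Fin n → ℚ) (hpv : ∀ i, 0 < pv i) (hpv1 : ∑ i, pv i = 1)
    (hinv : pv ᵥ* A = pv)
    (X : Pairs n → ℚ) (hX : ∀ I, 0 ≤ X I)
    (h : zeonSq A *ᵥ X = X) :
    matOf X = A * matOf X * Aᵀ :=
  stmt11_general A hA0 pv hpv hinv X hX h
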